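/- Let n ≥ 71, let i ∈ {1,2,3}, and let ℓ, m ∈ U_i be linearly independent. Then dim_ℂ ( S_3(U_i) + ℓ²·U + ℓ·m·U ) = C(n−21, 3) + 48; i.e., the sum of S_3(U_i) with the affine cone over the tangent space to T_{n,3} at a point of T_{n,3} ∩ P(S_3(U_i)) with linearly independent ℓ, m has dimension N(n−24) + 48. -/

import Mathlib

open MvPolynomial

/-- The linear form associated with a coefficient vector `v ∈ ℂ^{n+1}`. -/
noncomputable def lin {n : ℕ} (v : Fin (n + 1) → ℂ) : MvPolynomial (Fin (n + 1)) ℂ :=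
  ∑ j, MvPolynomial.C (v j) * MvPolynomial.X j

/-- The subspace `f·U = {f·u : u ∈ U}` of the polynomial ring, where `U` is the
space of linear forms. -/
noncomputable def mulU {n : ℕ} (f : MvPolynomial (Fin (n + 1)) ℂ) :
    Submodule ℂ (MvPolynomial (Fin (n + 1)) ℂ) :=
  Submodule.span ℂ (Set.range fun j : Fin (n + 1) => f * MvPolynomial.X j)

/-- The affine cone `ℓ^{d-1}·U + ℓ^{d-2}·m·U` over the tangent space to the tangential
variety `T_{n,d}` of the `d`-th Veronese variety at the point `[ℓ^{d-1} m]`. -/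
noncomputable def tanCone {n : ℕ} (d : ℕ) (ℓ m : Fin (n + 1) → ℂ) :
    Submodule ℂ (MvPolynomial (Fin (n + 1)) ℂ) :=
  mulU (lin ℓ ^ (d - 1)) ⊔ mulU (lin ℓ ^ (d - 2) * lin m)

/-- `v ∈ U_{i+1}`, i.e. the coordinates of `v` indexed by `{24i, …, 24i+23}` vanish. -/
def memU {n : ℕ} (i : Fin 3) (v : Fin (n + 1) → ℂ) : Prop :=
  ∀ j : Fin (n + 1), 24 * (i : ℕ) ≤ (j : ℕ) → (j : ℕ) < 24 * (i : ℕ) + 24 → v j = 0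

/-- `S_3(U_{i+1})`: the span of all products of three linear forms belonging to `U_{i+1}`. -/
noncomputable def S3U {n : ℕ} (i : Fin 3) : Submodule ℂ (MvPolynomial (Fin (n + 1)) ℂ) :=
  Submodule.span ℂ
    {p | ∃ a b c : Fin (n + 1) → ℂ,
      memU i a ∧ memU i b ∧ memU i c ∧ p = lin a * lin b * lin c}

/-- `v ∈ U_K`, the span of the variables `x_0, …, x_71`. -/
def memK {n : ℕ} (v : Fin (n + 1) → ℂ) : Prop :=
  ∀ j : Fin (n + 1), 72 ≤ (j : ℕ) → v j = 0

/-- `S_3(U_K)`: the span of all products of three linear forms in `x_0, …, x_71`. -/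
noncomputable def S3K (n : ℕ) : Submodule ℂ (MvPolynomial (Fin (n + 1)) ℂ) :=
  Submodule.span ℂ
    {p | ∃ a b c : Fin (n + 1) → ℂ,
      memK a ∧ memK b ∧ memK c ∧ p = lin a * lin b * lin c}

/-- The alternating sum `Σ_{j=1}^k (−1)^{j−1} C(k,j) · C(n−24j+3, 3)` (with the convention
`C(m,3) = 0` for `m < 3`, realized by truncated subtraction `n+3−24j`). -/
def altsum (n k : ℕ) : ℤ :=
  ∑ j ∈ Finset.Icc 1 k, (-1 : ℤ) ^ (j - 1) * (k.choose j : ℤ) * ((n + 3 - 24 * j).choose 3 : ℤ)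

/-- `k = #{i : a_i ≠ 0}`. -/
def kcount (a : Fin 3 → ℕ) : ℕ := (Finset.univ.filter fun i => a i ≠ 0).card

/-- The expected dimension `w(n, s; a_1, a_2, a_3)`, as an integer. -/
def expdimZ (n s : ℕ) (a : Fin 3 → ℕ) : ℤ :=
  min (altsum n (kcount a) + 48 * ((a 0 + a 1 + a 2 : ℕ) : ℤ) + (2 * n + 1) * s)
    (((n + 3).choose 3 : ℤ))

/-- The subspace `W(n, s; a_1, a_2, a_3)` determined by the given points. -/
noncomputable def Wspace {n s : ℕ} {a : Fin 3 → ℕ}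
    (ℓ m : Fin s → Fin (n + 1) → ℂ)
    (ℓ' m' : (i : Fin 3) → Fin (a i) → Fin (n + 1) → ℂ) :
    Submodule ℂ (MvPolynomial (Fin (n + 1)) ℂ) :=
  (⨆ i : {i : Fin 3 // a i ≠ 0},
      (S3U i.1 ⊔ ⨆ j : Fin (a i.1), tanCone 3 (ℓ' i.1 j) (m' i.1 j)))
    ⊔ ⨆ i : Fin s, tanCone 3 (ℓ i) (m i)

/-- The statement `T(n, s; a_1, a_2, a_3)`: some choice of points realizes the expected
dimension `w(n, s; a_1, a_2, a_3)`. -/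
def TStmt (n s : ℕ) (a : Fin 3 → ℕ) : Prop :=
  ∃ (ℓ m : Fin s → Fin (n + 1) → ℂ)
    (ℓ' m' : (i : Fin 3) → Fin (a i) → Fin (n + 1) → ℂ),
    (∀ (i : Fin 3) (j : Fin (a i)), memU i (ℓ' i j) ∧ memU i (m' i j)) ∧
    (Module.finrank ℂ (Wspace ℓ m ℓ' m') : ℤ) = expdimZ n s a

/-- `s_1(n) = 48k² + (11+4r)k + ⌊(4r²+22r+33)/48⌋` where `n = 24k + r`. -/
def s1 (n : ℕ) : ℕ :=
  48 * (n / 24) ^ 2 + (11 + 4 * (n % 24)) * (n / 24) +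
    (4 * (n % 24) ^ 2 + 22 * (n % 24) + 33) / 48

/-- `s_2(n) = s_1(n) + 1`. -/
def s2 (n : ℕ) : ℕ := s1 n + 1

/-- `t(n) = 4n − 37`. -/
def tfun (n : ℕ) : ℕ := 4 * n - 37

/-- The expected codimension `c(n)` of `W(n, t(n); s_1(n−24), 0, 0)`. -/
def cInt (n : ℕ) : ℤ :=
  ((n + 3).choose 3 : ℤ) - ((n - 21).choose 3 : ℤ) - (tfun n : ℤ) * (2 * n + 1) -
    48 * (s1 (n - 24) : ℤ)

/-!
Let `B` be the block of 24 variables missing from `U_i`. For `j ∉ B` the forms `ℓ²x_j` and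
`ℓm x_j` already lie in `S_3(U_i)`, so the sum is spanned by the cubic monomials in the variables
outside `B` together with the 48 forms `ℓ²x_b`, `ℓm x_b` (`b ∈ B`). The derivation `∂/∂x_b`
kills `S_3(U_i)`, `ℓ` and `m`, and sends `ℓ²x_{b'}`, `ℓm x_{b'}` to `δ_{bb'}ℓ²`, `δ_{bb'}ℓm`. As
`ℓ²` and `ℓm` are independent, the 48 forms are independent modulo `S_3(U_i)`, whose dimension is
the number `C(n - 21, 3)` of cubic monomials in the remaining `n - 23` variables.
-/

open Module Submodule Set Finset

namespace MvPolynomial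

theorem monomial_toFinsupp_one {σ R : Type*} [CommSemiring R] [DecidableEq σ] (s : Multiset σ) :
    monomial (Multiset.toFinsupp s) (1 : R) = (s.map X).prod := by
  induction s using Multiset.induction_on with
  | empty => simp
  | cons a s ih =>
    rw [← Multiset.singleton_add, Multiset.toFinsupp_add, ← mul_one (1 : R), ← monomial_mul,
      ih]
    simp [X]

theorem pderiv_mul_X_of_pderiv_eq_zero {σ R : Type*} [CommSemiring R] [DecidableEq σ]
    {i : σ} {g : MvPolynomial σ R} (hg : pderiv i g = 0) (j : σ) :
    pderiv i (g * X j) = if j = i then g else 0 := by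
  rw [pderiv_mul, hg, zero_mul, zero_add]
  split_ifs with hji
  · rw [hji, pderiv_X_self, mul_one]
  · rw [pderiv_X_of_ne hji, mul_zero]

variable {σ K ι : Type*} [Field K] [Fintype ι]

noncomputable def spanMulX (B : Finset σ) (f : ι → MvPolynomial σ K) :
    Submodule K (MvPolynomial σ K) :=
  span K (range fun p : B × ι => f p.2 * X (p.1 : σ))

variable {B : Finset σ} {W : Submodule K (MvPolynomial σ K)} {f : ι → MvPolynomial σ K}

theorem eq_zero_of_sum_smul_mul_X_mem (hW : ∀ b ∈ B, ∀ p ∈ W, pderiv b p = 0)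
    (hf : LinearIndependent K f) (hfB : ∀ b ∈ B, ∀ k, pderiv b (f k) = 0)
    (c : B × ι → K) (hc : ∑ p, c p • (f p.2 * X (p.1 : σ)) ∈ W) : c = 0 := by
  classical
  funext ⟨b, k⟩
  have hcoord : ∑ k, c (b, k) • f k = 0 := by
    simpa [map_sum, Fintype.sum_prod_type, pderiv_mul_X_of_pderiv_eq_zero (hfB b b.2 _),
      Subtype.coe_inj, Finset.sum_ite_eq'] using hW b b.2 _ hc
  exact Fintype.linearIndependent_iff.mp hf _ hcoord k

theorem finrank_sup_spanMulX [FiniteDimensional K W] (hW : ∀ b ∈ B, ∀ p ∈ W, pderiv b p = 0)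
    (hf : LinearIndependent K f) (hfB : ∀ b ∈ B, ∀ k, pderiv b (f k) = 0) :
    finrank K ↥(W ⊔ spanMulX B f) = finrank K W + #B * Fintype.card ι := by
  have hind : LinearIndependent K fun p : B × ι => f p.2 * X (p.1 : σ) :=
    Fintype.linearIndependent_iff.mpr fun c hc =>
      congrFun (eq_zero_of_sum_smul_mul_X_mem hW hf hfB c (hc ▸ W.zero_mem))
  have hdisj : W ⊓ spanMulX B f = ⊥ := by
    refine eq_bot_iff.mpr fun x ⟨hxW, hx⟩ => ?_
    obtain ⟨c, rfl⟩ := mem_span_range_iff_exists_fun K |>.mp hx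
    simp [eq_zero_of_sum_smul_mul_X_mem hW hf hfB c hxW]
  have : FiniteDimensional K (spanMulX B f) := .span_of_finite K (finite_range _)
  have hdim := finrank_sup_add_finrank_inf_eq W (spanMulX B f)
  have hcard : finrank K (spanMulX B f) = #B * Fintype.card ι := by
    rw [spanMulX, finrank_span_eq_card hind, Fintype.card_prod, Fintype.card_coe]
  rw [hdisj, finrank_bot, hcard] at hdim
  omega

end MvPolynomial

open MvPolynomial

section LinearForms

variable {n : ℕ}

theorem coeff_single_lin (v : Fin (n + 1) → ℂ) (t : Fin (n + 1)) :
    coeff (Finsupp.single t 1) (lin v) = v t := by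
  simp [lin, coeff_sum, coeff_C_mul, coeff_X, Finsupp.single_left_inj]

theorem lin_single (p : Fin (n + 1)) : lin (Pi.single p (1 : ℂ)) = X p := by
  simp [lin, Pi.single_apply]

theorem pderiv_lin (j : Fin (n + 1)) (v : Fin (n + 1) → ℂ) : pderiv j (lin v) = C (v j) := by
  simp [lin, Pi.single_apply]

noncomputable def linₗ : (Fin (n + 1) → ℂ) →ₗ[ℂ] MvPolynomial (Fin (n + 1)) ℂ where
  toFun := lin
  map_add' v w := by simp [lin, add_mul, Finset.sum_add_distrib]
  map_smul' a v := by simp [lin, smul_eq_C_mul, Finset.mul_sum, mul_assoc]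

theorem linₗ_injective : Function.Injective (linₗ (n := n)) :=
  fun v w (h : lin v = lin w) => funext fun t => by
    simpa [coeff_single_lin] using congrArg (coeff (Finsupp.single t 1)) h

theorem linearIndependent_lin_mul_lin {ι : Type*} {ℓ : Fin (n + 1) → ℂ}
    {w : ι → Fin (n + 1) → ℂ} (hw : LinearIndependent ℂ w) (hℓ : ℓ ≠ 0) :
    LinearIndependent ℂ fun k => lin ℓ * lin (w k) := by
  have hℓ' : lin ℓ ≠ 0 := fun h => hℓ (linₗ_injective (h.trans (map_zero linₗ).symm))
  exact hw.map' ((LinearMap.mulLeft ℂ (lin ℓ)).comp linₗ)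
    (LinearMap.ker_eq_bot.mpr ((mul_right_injective₀ hℓ').comp linₗ_injective))

end LinearForms

section Cubics

variable {n : ℕ} (B : Finset (Fin (n + 1)))

noncomputable def S3Outside : Submodule ℂ (MvPolynomial (Fin (n + 1)) ℂ) :=
  span ℂ {p | ∃ a b c : Fin (n + 1) → ℂ,
    (∀ j ∈ B, a j = 0) ∧ (∀ j ∈ B, b j = 0) ∧ (∀ j ∈ B, c j = 0) ∧
      p = lin a * lin b * lin c}

variable {B} in
noncomputable def cubeMonomial (s : Sym {j // j ∉ B} 3) : MvPolynomial (Fin (n + 1)) ℂ :=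
  ((s : Multiset {j // j ∉ B}).map fun j => X j.1).prod

theorem cubeMonomial_mem_S3Outside (s : Sym {j // j ∉ B} 3) :
    cubeMonomial s ∈ S3Outside B := by
  obtain ⟨p, q, r, hs⟩ := Multiset.card_eq_three.mp s.2
  rw [Sym.val_eq_coe] at hs
  have hsingle (j : {j // j ∉ B}) : ∀ i ∈ B, (Pi.single j.1 1 : Fin (n + 1) → ℂ) i = 0 :=
    fun i hi => Pi.single_eq_of_ne (ne_of_mem_of_not_mem hi j.2) 1
  refine subset_span ⟨_, _, _, hsingle p, hsingle q, hsingle r, ?_⟩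
  simp [cubeMonomial, hs, lin_single, mul_assoc]

theorem lin_mem_span_X {v : Fin (n + 1) → ℂ} (hv : ∀ j ∈ B, v j = 0) :
    lin v ∈ span ℂ (range fun j : {j // j ∉ B} => X (R := ℂ) j.1) := by
  refine sum_mem fun j _ => ?_
  by_cases hj : j ∈ B
  · simp [hv j hj]
  · rw [← smul_eq_C_mul]
    exact smul_mem _ _ (subset_span ⟨⟨j, hj⟩, rfl⟩)

theorem S3Outside_eq_span_cubeMonomial :
    S3Outside B = span ℂ (range (cubeMonomial (B := B))) := by
  refine le_antisymm (span_le.mpr ?_)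
    (span_le.mpr (range_subset_iff.mpr (cubeMonomial_mem_S3Outside B)))
  rintro _ ⟨a, b, c, ha, hb, hc, rfl⟩
  have habc := mul_mem_mul (mul_mem_mul (lin_mem_span_X B ha) (lin_mem_span_X B hb))
    (lin_mem_span_X B hc)
  rw [span_mul_span, span_mul_span] at habc
  refine span_mono ?_ habc
  rintro _ ⟨_, ⟨_, ⟨p, rfl⟩, _, ⟨q, rfl⟩, rfl⟩, _, ⟨r, rfl⟩, rfl⟩
  exact ⟨⟨{p, q, r}, rfl⟩, by simp [cubeMonomial, mul_assoc]⟩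

theorem linearIndependent_cubeMonomial : LinearIndependent ℂ (cubeMonomial (B := B)) := by
  classical
  have hmon : cubeMonomial (B := B) = basisMonomials (Fin (n + 1)) ℂ ∘ Multiset.toFinsupp ∘
      Multiset.map Subtype.val ∘ ((↑) : Sym {j // j ∉ B} 3 → Multiset {j // j ∉ B}) := by
    funext s
    simp [cubeMonomial, monomial_toFinsupp_one, Multiset.map_map]
  rw [hmon]
  exact (basisMonomials _ ℂ).linearIndependent.comp _ (Multiset.toFinsupp.injective.comp
    ((Multiset.map_injective Subtype.val_injective).comp Sym.coe_injective))

instance : FiniteDimensional ℂ (S3Outside B) := by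
  rw [S3Outside_eq_span_cubeMonomial]
  exact .span_of_finite ℂ (finite_range _)

theorem finrank_S3Outside : finrank ℂ (S3Outside B) = (n + 1 - #B + 2).choose 3 := by
  rw [S3Outside_eq_span_cubeMonomial, finrank_span_eq_card (linearIndependent_cubeMonomial B),
    Sym.card_sym_eq_choose, Fintype.card_subtype_compl, Fintype.card_fin, Fintype.card_coe]
  rfl

theorem pderiv_eq_zero_of_mem_S3Outside {b : Fin (n + 1)} (hb : b ∈ B) {p}
    (hp : p ∈ S3Outside B) : pderiv b p = 0 := by
  induction hp using span_induction with
  | mem _ h =>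
    obtain ⟨a, b', c, ha, hb', hc, rfl⟩ := h
    simp [pderiv_lin, ha b hb, hb' b hb, hc b hb]
  | zero => simp
  | add _ _ _ _ h₁ h₂ => simp [h₁, h₂]
  | smul _ _ _ h => simp [h]

end Cubics

section TangentCone

variable {n : ℕ} {B : Finset (Fin (n + 1))} {ℓ m : Fin (n + 1) → ℂ}

theorem tanCone_three (ℓ m : Fin (n + 1) → ℂ) :
    tanCone 3 ℓ m = mulU (lin ℓ * lin ℓ) ⊔ mulU (lin ℓ * lin m) := by
  simp [tanCone, pow_two]

theorem S3Outside_sup_tanCone (hℓ : ∀ j ∈ B, ℓ j = 0) (hm : ∀ j ∈ B, m j = 0) :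
    S3Outside B ⊔ tanCone 3 ℓ m =
      S3Outside B ⊔ spanMulX B fun k => lin ℓ * lin (![ℓ, m] k) := by
  have hw : ∀ k, ∀ j ∈ B, ![ℓ, m] k j = 0 := Fin.forall_fin_two.mpr ⟨hℓ, hm⟩
  have hmulU : ∀ k, mulU (lin ℓ * lin (![ℓ, m] k)) ≤
      S3Outside B ⊔ spanMulX B fun k => lin ℓ * lin (![ℓ, m] k) := by
    refine fun k => span_le.mpr (range_subset_iff.mpr fun j => ?_)
    by_cases hj : j ∈ B
    · exact mem_sup_right (subset_span ⟨(⟨j, hj⟩, k), rfl⟩)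
    · refine mem_sup_left (subset_span ⟨ℓ, ![ℓ, m] k, Pi.single j 1, hℓ, hw k,
        fun i hi => Pi.single_eq_of_ne (ne_of_mem_of_not_mem hi hj) 1, ?_⟩)
      rw [lin_single]
  refine le_antisymm (sup_le le_sup_left ?_) (sup_le le_sup_left ?_)
  · rw [tanCone_three]
    exact sup_le (hmulU 0) (hmulU 1)
  · refine le_sup_of_le_right (span_le.mpr (range_subset_iff.mpr fun ⟨b, k⟩ => ?_))
    rw [tanCone_three]
    fin_cases k
    · exact mem_sup_left (subset_span ⟨b, rfl⟩)
    · exact mem_sup_right (subset_span ⟨b, rfl⟩)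

theorem finrank_S3Outside_sup_tanCone (hℓ : ∀ j ∈ B, ℓ j = 0) (hm : ∀ j ∈ B, m j = 0)
    (h : LinearIndependent ℂ ![ℓ, m]) :
    finrank ℂ ↥(S3Outside B ⊔ tanCone 3 ℓ m) = (n + 1 - #B + 2).choose 3 + 2 * #B := by
  have hw : ∀ k, ∀ j ∈ B, ![ℓ, m] k j = 0 := Fin.forall_fin_two.mpr ⟨hℓ, hm⟩
  rw [S3Outside_sup_tanCone hℓ hm,
    finrank_sup_spanMulX (fun b hb _ hp => pderiv_eq_zero_of_mem_S3Outside B hb hp)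
      (linearIndependent_lin_mul_lin (ℓ := ℓ) h (h.ne_zero 0))
      (fun b hb k => by simp [pderiv_lin, hℓ b hb, hw k b hb]),
    finrank_S3Outside, Fintype.card_fin, mul_comm]

end TangentCone

section Blocks

variable {n : ℕ}

def varBlock (i : Fin 3) : Finset (Fin (n + 1)) :=
  univ.filter fun j => 24 * (i : ℕ) ≤ j ∧ (j : ℕ) < 24 * i + 24

theorem memU_iff {i : Fin 3} {v : Fin (n + 1) → ℂ} :
    memU i v ↔ ∀ j ∈ varBlock i, v j = 0 := by
  simp [memU, varBlock]

theorem S3U_eq_S3Outside (i : Fin 3) : S3U (n := n) i = S3Outside (varBlock i) := by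
  simp only [S3U, S3Outside, memU_iff]

theorem card_varBlock (hn : 71 ≤ n) (i : Fin 3) : #(varBlock (n := n) i) = 24 := by
  have hval : (varBlock (n := n) i).map Fin.valEmbedding =
      Finset.Ico (24 * (i : ℕ)) (24 * i + 24) := by
    ext x
    simp only [varBlock, Finset.mem_map, mem_filter, Finset.mem_univ, true_and,
      Fin.valEmbedding_apply, Finset.mem_Ico]
    constructor
    · rintro ⟨j, hj, rfl⟩
      exact hj
    · exact fun hx => ⟨⟨x, by omega⟩, hx, rfl⟩
  rw [← card_map, hval, Nat.card_Ico]
  omega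

end Blocks

/-- Equation (13): for `n ≥ 71`, `i ∈ {1,2,3}` and linearly independent `ℓ, m ∈ U_i`,
`dim (S_3(U_i) + ℓ²·U + ℓ·m·U) = C(n−21,3) + 48 = N(n−24) + 48`. -/
theorem dim_S3U_sup_tanCone (n : ℕ) (hn : 71 ≤ n) (i : Fin 3) (ℓ m : Fin (n + 1) → ℂ)
    (hℓ : memU i ℓ) (hm : memU i m) (h : LinearIndependent ℂ ![ℓ, m]) :
    Module.finrank ℂ ↥(S3U (n := n) i ⊔ tanCone 3 ℓ m) = (n - 21).choose 3 + 48 := by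
  rw [S3U_eq_S3Outside, finrank_S3Outside_sup_tanCone (memU_iff.mp hℓ) (memU_iff.mp hm) h,
    card_varBlock hn, show n + 1 - 24 + 2 = n - 21 by omega]
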